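/- Let E be a strongly connected graph with finitely many vertices, and let G(E) carry a Hausdorff locally compact non-discrete shift-continuous topology. Then there exists a path v in E such that for every open compact neighborhood U of 0, the set L_v ∩ U is infinite, where L_v = {uv⁻¹ : u ∈ Path(E), r(u) = r(v)} is the L-class of vv⁻¹. -/

import Mathlib

/-!
Strong connectivity puts a cycle `c` at every vertex. For `x = u v⁻¹ ≠ 0` the idempotents
`(uc)(uc)⁻¹` and `(vc)(vc)⁻¹` both send `x` to `x₁ = (uc)(vc)⁻¹ ≠ x`; separating `x` from `x₁` and
pulling back along these two translations gives a neighbourhood of `x` all of whose elements are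
`p q⁻¹` with `p ≤ uc`, `q ≤ vc`, a finite set. So every nonzero point is isolated, hence any compact
set minus an open neighbourhood of `0` is finite, `0` has an open compact neighbourhood `U₀`, and
`U₀` is infinite because the topology is not discrete.

By pigeonhole over the finitely many vertices, infinitely many `u v⁻¹ ∈ U₀` have `s(u) = b` for one
vertex `b`. Left translation by a cycle `c` at `b` maps these elements injectively to themselves,
lengthens `u` and leaves `U₀` at only finitely many points, so some `u v⁻¹` never leaves `U₀`: its
orbit `cⁿ u v⁻¹` is an infinite subset of `L_v ∩ U₀`, which differs from `L_v ∩ U` by a finite set.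
-/

/-- A directed graph: vertices, edges, source and range maps. -/
structure DGraph where
  V : Type
  E : Type
  s : E → V
  r : E → V

namespace DGraph

variable {Q : DGraph}

/-- `pOk Q a l` : the list of edges `l` forms a valid path starting at vertex `a`. -/
def pOk (Q : DGraph) : Q.V → List Q.E → Prop
  | _, [] => True
  | a, e :: l => Q.s e = a ∧ pOk Q (Q.r e) l

/-- The end vertex of an edge-list starting at `a`. -/
def pRng (Q : DGraph) (a : Q.V) (l : List Q.E) : Q.V :=
  l.foldl (fun _ e => Q.r e) a

theorem pRng_append (a : Q.V) (l₁ l₂ : List Q.E) :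
    pRng Q a (l₁ ++ l₂) = pRng Q (pRng Q a l₁) l₂ :=
  List.foldl_append

theorem pOk_append {a : Q.V} {l₁ l₂ : List Q.E} (h₁ : pOk Q a l₁)
    (h₂ : pOk Q (pRng Q a l₁) l₂) : pOk Q a (l₁ ++ l₂) := by
  induction l₁ generalizing a with
  | nil => exact h₂
  | cons e l ih =>
      obtain ⟨he, hl⟩ := h₁
      exact ⟨he, ih hl h₂⟩

theorem pOk_drop {a : Q.V} {l₁ l₂ : List Q.E} (h : pOk Q a (l₁ ++ l₂)) :
    pOk Q (pRng Q a l₁) l₂ := by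
  induction l₁ generalizing a with
  | nil => exact h
  | cons e l ih => exact ih h.2

/-- A (finite, directed) path in the graph `Q`: a start vertex together with a
compatible list of edges.  Paths of length `0` are vertices. -/
structure GPath (Q : DGraph) where
  start : Q.V
  edges : List Q.E
  ok : pOk Q start edges

/-- The source `s(p)` of a path. -/
def GPath.src (p : GPath Q) : Q.V := p.start

/-- The range `r(p)` of a path. -/
def GPath.rng (p : GPath Q) : Q.V := pRng Q p.start p.edges

/-- The length `|p|` of a path. -/
def GPath.length (p : GPath Q) : ℕ := p.edges.length

/-- The trivial (length zero) path at a vertex `a`. -/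
def GPath.triv (Q : DGraph) (a : Q.V) : GPath Q := ⟨a, [], trivial⟩

/-- Concatenation of composable paths. -/
def GPath.comp (p q : GPath Q) (h : p.rng = q.start) : GPath Q :=
  ⟨p.start, p.edges ++ q.edges, pOk_append p.ok (by
    have hq := q.ok
    rw [← h] at hq
    exact hq)⟩

theorem GPath.comp_rng (p q : GPath Q) (h : p.rng = q.start) :
    (p.comp q h).rng = q.rng := by
  show pRng Q p.start (p.edges ++ q.edges) = q.rng
  rw [pRng_append, show pRng Q p.start p.edges = q.start from h]
  rfl

theorem exists_sub {p q : GPath Q} (h1 : q.start = p.start)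
    (h2 : p.edges <+: q.edges) :
    ∃ w : GPath Q, w.start = p.rng ∧ w.rng = q.rng ∧ p.edges ++ w.edges = q.edges := by
  obtain ⟨t, ht⟩ := h2
  have hok : pOk Q p.start (p.edges ++ t) := by rw [ht, ← h1]; exact q.ok
  refine ⟨⟨p.rng, t, pOk_drop hok⟩, rfl, ?_, ht⟩
  show pRng Q (pRng Q p.start p.edges) t = pRng Q q.start q.edges
  rw [← pRng_append, ht, ← h1]

/-- If the path `q` decomposes as `p·w`, this is the path `w`. -/
noncomputable def subPath (p q : GPath Q) (h1 : q.start = p.start)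
    (h2 : p.edges <+: q.edges) : GPath Q :=
  (exists_sub h1 h2).choose

theorem subPath_spec (p q : GPath Q) (h1 : q.start = p.start)
    (h2 : p.edges <+: q.edges) :
    (subPath p q h1 h2).start = p.rng ∧ (subPath p q h1 h2).rng = q.rng ∧
      p.edges ++ (subPath p q h1 h2).edges = q.edges :=
  (exists_sub h1 h2).choose_spec

/-- The graph inverse semigroup `G(E)` over the graph `Q`: the element `0`
together with the elements `u v⁻¹` where `u, v` are paths with `r(u) = r(v)`. -/
inductive GIS (Q : DGraph) : Type
  | zero : GIS Q
  | elm (u v : GPath Q) (h : u.rng = v.rng) : GIS Q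

instance : Zero (GIS Q) := ⟨GIS.zero⟩

-- Multiplication in the graph inverse semigroup:
-- `u₁v₁⁻¹ · u₂v₂⁻¹ = u₁wv₂⁻¹` if `u₂ = v₁w`, `u₁(v₂w)⁻¹` if `v₁ = u₂w`, `0` otherwise.
open Classical in
noncomputable def GIS.mul : GIS Q → GIS Q → GIS Q
  | .zero, _ => .zero
  | _, .zero => .zero
  | .elm u₁ v₁ h₁, .elm u₂ v₂ h₂ =>
    if hA : u₂.start = v₁.start ∧ v₁.edges <+: u₂.edges then
      GIS.elm (u₁.comp (subPath v₁ u₂ hA.1 hA.2)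
          (by rw [(subPath_spec v₁ u₂ hA.1 hA.2).1, h₁]))
        v₂
        (by rw [GPath.comp_rng, (subPath_spec v₁ u₂ hA.1 hA.2).2.1, h₂])
    else if hB : v₁.start = u₂.start ∧ u₂.edges <+: v₁.edges then
      GIS.elm u₁
        (v₂.comp (subPath u₂ v₁ hB.1 hB.2)
          (by rw [(subPath_spec u₂ v₁ hB.1 hB.2).1, h₂]))
        (by rw [GPath.comp_rng, (subPath_spec u₂ v₁ hB.1 hB.2).2.1, h₁])
    else .zero

noncomputable instance : Mul (GIS Q) := ⟨GIS.mul⟩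

/-- The inversion map of the graph inverse semigroup: `(uv⁻¹)⁻¹ = vu⁻¹`, `0⁻¹ = 0`. -/
def GIS.inv : GIS Q → GIS Q
  | .zero => .zero
  | .elm u v h => .elm v u h.symm

/-- The canonical identification of a path `u` with the element `u · r(u)⁻¹` of `G(E)`. -/
def toGIS (p : GPath Q) : GIS Q := GIS.elm p (GPath.triv Q p.rng) rfl

end DGraph


namespace DGraph
/-- A directed graph is strongly connected if any vertex can be reached from any other. -/
def StrConn (Q : DGraph) : Prop :=
  ∀ a b : Q.V, ∃ p : GPath Q, p.start = a ∧ p.rng = b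
end DGraph


namespace DGraph
/-- `L_v`: the Green `L`-class of the idempotent `vv⁻¹`, consisting of all `uv⁻¹`
with `r(u) = r(v)`. -/
def Lcl {Q : DGraph} (v : GPath Q) : Set (GIS Q) :=
  {x | ∃ (u : GPath Q) (h : u.rng = v.rng), x = GIS.elm u v h}
end DGraph

open DGraph


open Set Function

section Orbit

variable {X : Type*} {F : X → X} {S : Set X} {ℓ : X → ℕ}

theorem add_le_apply_iterate (hmaps : MapsTo F S S) (hℓ : ∀ x ∈ S, ℓ x < ℓ (F x)) {x : X}
    (hx : x ∈ S) (n : ℕ) : ℓ x + n ≤ ℓ (F^[n] x) := by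
  induction n with
  | zero => simp
  | succ n ih =>
    have := hℓ _ (hmaps.iterate n hx)
    rw [iterate_succ_apply']
    omega

theorem injective_iterate_apply_of_lt (hmaps : MapsTo F S S) (hℓ : ∀ x ∈ S, ℓ x < ℓ (F x))
    {x : X} (hx : x ∈ S) : Injective (fun n => F^[n] x) :=
  Injective.of_comp (f := ℓ) (strictMono_nat_of_lt_succ fun n => by
    simpa only [comp_apply, iterate_succ_apply'] using hℓ _ (hmaps.iterate n hx)).injective

theorem finite_setOf_iterate_eq (hmaps : MapsTo F S S) (hinj : InjOn F S)
    (hℓ : ∀ x ∈ S, ℓ x < ℓ (F x)) (y : X) : {x | x ∈ S ∧ ∃ n, F^[n] x = y}.Finite := by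
  refine ((finite_Iic (ℓ y)).biUnion fun n _ => Subsingleton.finite
    (s := {x | x ∈ S ∧ F^[n] x = y}) fun x hx x' hx' =>
      hinj.iterate hmaps n hx.1 hx'.1 (hx.2.trans hx'.2.symm)).subset ?_
  rintro x ⟨hx, n, rfl⟩
  exact mem_biUnion (show n ≤ ℓ (F^[n] x) by have := add_le_apply_iterate hmaps hℓ hx n; omega)
    ⟨hx, rfl⟩

/-- Each orbit leaving `U` passes through one of the finitely many exit points of `U`, and by
`finite_setOf_iterate_eq` only finitely many points of `S` reach a given exit point. -/
theorem exists_forall_iterate_mem (hmaps : MapsTo F S S) (hinj : InjOn F S)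
    (hℓ : ∀ x ∈ S, ℓ x < ℓ (F x)) {U : Set X} (hSU : (S ∩ U).Infinite)
    (hexit : (U \ F ⁻¹' U).Finite) : ∃ x ∈ S, ∀ n, F^[n] x ∈ U := by
  by_contra! hleave
  refine hSU ((hexit.biUnion fun y _ => finite_setOf_iterate_eq hmaps hinj hℓ y).subset ?_)
  rintro x ⟨hxS, hxU⟩
  obtain ⟨n, hn, hn'⟩ : ∃ n, F^[n] x ∈ U ∧ F^[n + 1] x ∉ U := by
    by_contra! hstay
    obtain ⟨n, hn⟩ := hleave x hxS
    exact hn (Nat.rec hxU (fun n ih => hstay n ih) n)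
  rw [iterate_succ_apply'] at hn'
  exact mem_biUnion (show F^[n] x ∈ U \ F ⁻¹' U from ⟨hn, hn'⟩) ⟨hxS, n, rfl⟩

end Orbit

section IsolatedOutsidePoint

variable {X : Type*} [TopologicalSpace X] {z : X}

theorem isOpen_of_notMem (hiso : ∀ x, x ≠ z → IsOpen ({x} : Set X)) (s : Set X) (hs : z ∉ s) :
    IsOpen s := by
  rw [← biUnion_of_singleton s]
  exact isOpen_biUnion fun x hx => hiso x fun h => hs (h ▸ hx)

theorem IsCompact.finite_diff (hiso : ∀ x, x ≠ z → IsOpen ({x} : Set X)) {K W : Set X}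
    (hK : IsCompact K) (hW : IsOpen W) (hz : z ∈ W) : (K \ W).Finite :=
  (hK.diff hW).finite (isDiscrete_iff_forall_mem_exists_isOpen.2 fun x hx =>
    ⟨{x}, hiso x fun h => hx.2 (h ▸ hz), inter_eq_left.2 (singleton_subset_iff.2 hx)⟩)

theorem exists_isOpen_isCompact_mem [LocallyCompactSpace X]
    (hiso : ∀ x, x ≠ z → IsOpen ({x} : Set X)) :
    ∃ U : Set X, IsOpen U ∧ IsCompact U ∧ z ∈ U := by
  obtain ⟨K, hKc, hK⟩ := exists_compact_mem_nhds z
  have hz : z ∈ interior K := mem_interior_iff_mem_nhds.2 hK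
  refine ⟨interior K, isOpen_interior, ?_, hz⟩
  rw [← sdiff_sdiff_cancel_left interior_subset]
  exact hKc.diff (isOpen_of_notMem hiso _ fun h => h.2 hz)

theorem Set.infinite_of_isOpen_of_mem [T1Space X] (hiso : ∀ x, x ≠ z → IsOpen ({x} : Set X))
    (hnd : ¬ DiscreteTopology X) {W : Set X} (hW : IsOpen W) (hz : z ∈ W) : W.Infinite :=
  fun hfin =>
  hnd <| discreteTopology_iff_isOpen_singleton.2 fun x => by
    by_cases hx : x = z
    · exact hx ▸ isOpen_singleton_of_finite_mem_nhds z (hW.mem_nhds hz) hfin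
    · exact hiso x hx

end IsolatedOutsidePoint

namespace DGraph

variable {Q : DGraph}

theorem GPath.ext {p q : GPath Q} (hs : p.start = q.start) (he : p.edges = q.edges) : p = q := by
  cases p; cases q; cases hs; cases he; rfl

theorem exists_cycle (hc : StrConn Q) (e : Q.E) (b : Q.V) :
    ∃ c : GPath Q, c.start = b ∧ c.rng = b ∧ c.edges ≠ [] := by
  obtain ⟨p₁, hp₁s, hp₁r⟩ := hc b (Q.s e)
  obtain ⟨p₂, hp₂s, hp₂r⟩ := hc (Q.r e) b
  let pe : GPath Q := ⟨Q.s e, [e], rfl, trivial⟩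
  have h₂ : (p₁.comp pe hp₁r).rng = p₂.start := by rw [GPath.comp_rng, hp₂s]; rfl
  refine ⟨(p₁.comp pe hp₁r).comp p₂ h₂, hp₁s, by rw [GPath.comp_rng, hp₂r], ?_⟩
  show (p₁.edges ++ [e]) ++ p₂.edges ≠ []
  simp

namespace GIS

theorem elm_congr {u v u' v' : GPath Q} (hu : u = u') (hv : v = v') {h : u.rng = v.rng}
    {h' : u'.rng = v'.rng} : elm u v h = elm u' v' h' := by
  subst hu hv; rfl

theorem elm_ne_zero {u v : GPath Q} (h : u.rng = v.rng) : elm u v h ≠ 0 := nofun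

theorem mul_zero (x : GIS Q) : x * 0 = 0 := by
  cases x <;> rfl

theorem finite_of_isEmpty_edges [IsEmpty Q.E] [Finite Q.V] : Finite (GIS Q) := by
  have hnil (p : GPath Q) : p.edges = [] :=
    List.eq_nil_iff_forall_not_mem.2 fun e _ => isEmptyElim e
  refine Finite.of_injective (β := Option (Q.V × Q.V))
    (fun | .zero => none | .elm u v _ => some (u.start, v.start)) ?_
  rintro (_ | ⟨u, v, h⟩) (_ | ⟨u', v', h'⟩) huv <;> simp only [reduceCtorEq, Option.some.injEq,
    Prod.mk.injEq] at huv
  · rfl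
  · exact elm_congr (GPath.ext huv.1 ((hnil u).trans (hnil u').symm))
      (GPath.ext huv.2 ((hnil v).trans (hnil v').symm))

theorem subPath_edges (p q : GPath Q) (h1 : q.start = p.start) (h2 : p.edges <+: q.edges) :
    (subPath p q h1 h2).edges = q.edges.drop p.edges.length := by
  rw [← (subPath_spec p q h1 h2).2.2, List.drop_left]

theorem elm_mul_elm_of_le {u₁ v₁ u₂ v₂ : GPath Q} (h₁ : u₁.rng = v₁.rng) (h₂ : u₂.rng = v₂.rng)
    (hA : u₂.start = v₁.start ∧ v₁.edges <+: u₂.edges) :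
    ∃ (U : GPath Q) (h : U.rng = v₂.rng), elm u₁ v₁ h₁ * elm u₂ v₂ h₂ = elm U v₂ h ∧
      U.start = u₁.start ∧ U.edges = u₁.edges ++ u₂.edges.drop v₁.edges.length := by
  have := subPath_spec v₁ u₂ hA.1 hA.2
  refine ⟨u₁.comp (subPath v₁ u₂ hA.1 hA.2) (by rw [this.1, h₁]),
    by rw [GPath.comp_rng, this.2.1, h₂], ?_, rfl,
    congrArg (u₁.edges ++ ·) (subPath_edges v₁ u₂ hA.1 hA.2)⟩
  show GIS.mul _ _ = _
  rw [GIS.mul, dif_pos hA]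

theorem elm_mul_elm_of_ge {u₁ v₁ u₂ v₂ : GPath Q} (h₁ : u₁.rng = v₁.rng) (h₂ : u₂.rng = v₂.rng)
    (hnA : ¬(u₂.start = v₁.start ∧ v₁.edges <+: u₂.edges))
    (hB : v₁.start = u₂.start ∧ u₂.edges <+: v₁.edges) :
    ∃ (V : GPath Q) (h : u₁.rng = V.rng), elm u₁ v₁ h₁ * elm u₂ v₂ h₂ = elm u₁ V h ∧
      V.start = v₂.start ∧ V.edges = v₂.edges ++ v₁.edges.drop u₂.edges.length := by
  have := subPath_spec u₂ v₁ hB.1 hB.2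
  refine ⟨v₂.comp (subPath u₂ v₁ hB.1 hB.2) (by rw [this.1, h₂]),
    by rw [GPath.comp_rng, this.2.1, h₁], ?_, rfl,
    congrArg (v₂.edges ++ ·) (subPath_edges u₂ v₁ hB.1 hB.2)⟩
  show GIS.mul _ _ = _
  rw [GIS.mul, dif_neg hnA, dif_pos hB]

theorem elm_mul_elm_of_incomparable {u₁ v₁ u₂ v₂ : GPath Q} (h₁ : u₁.rng = v₁.rng)
    (h₂ : u₂.rng = v₂.rng) (hnA : ¬(u₂.start = v₁.start ∧ v₁.edges <+: u₂.edges))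
    (hnB : ¬(v₁.start = u₂.start ∧ u₂.edges <+: v₁.edges)) :
    elm u₁ v₁ h₁ * elm u₂ v₂ h₂ = 0 := by
  show GIS.mul _ _ = _
  rw [GIS.mul, dif_neg hnA, dif_neg hnB]
  rfl

theorem idem_mul_elm_eq_self_or_zero (w : GPath Q) {p q : GPath Q} (h : p.rng = q.rng)
    (hp : ¬(p.start = w.start ∧ p.edges <+: w.edges)) :
    elm w w rfl * elm p q h = elm p q h ∨ elm w w rfl * elm p q h = 0 := by
  by_cases hA : p.start = w.start ∧ w.edges <+: p.edges
  · obtain ⟨U, _, hmul, hUs, hUe⟩ := elm_mul_elm_of_le rfl h hA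
    obtain ⟨t, ht⟩ := hA.2
    refine .inl (hmul.trans (elm_congr (GPath.ext (hUs.trans hA.1.symm) ?_) rfl))
    rw [hUe, ← ht, List.drop_left]
  · exact .inr (elm_mul_elm_of_incomparable rfl h hA fun hB => hp ⟨hB.1.symm, hB.2⟩)

theorem elm_mul_idem_eq_self_or_zero (w : GPath Q) {p q : GPath Q} (h : p.rng = q.rng)
    (hq : ¬(q.start = w.start ∧ q.edges <+: w.edges)) :
    elm p q h * elm w w rfl = elm p q h ∨ elm p q h * elm w w rfl = 0 := by
  have hnA : ¬(w.start = q.start ∧ q.edges <+: w.edges) := fun hA => hq ⟨hA.1.symm, hA.2⟩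
  by_cases hB : q.start = w.start ∧ w.edges <+: q.edges
  · obtain ⟨V, _, hmul, hVs, hVe⟩ := elm_mul_elm_of_ge h rfl hnA hB
    obtain ⟨t, ht⟩ := hB.2
    refine .inl (hmul.trans (elm_congr rfl (GPath.ext (hVs.trans hB.1.symm) ?_)))
    rw [hVe, ← ht, List.drop_left]
  · exact .inr (elm_mul_elm_of_incomparable h rfl hnA hB)

theorem toGIS_mul_elm (c : GPath Q) {u v : GPath Q} (h : u.rng = v.rng) (hu : c.rng = u.start) :
    toGIS c * elm u v h = elm (c.comp u hu) v (by rw [GPath.comp_rng, h]) := by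
  obtain ⟨U, _, hmul, hUs, hUe⟩ :=
    elm_mul_elm_of_le (u₁ := c) (v₁ := GPath.triv Q c.rng) rfl h ⟨hu.symm, List.nil_prefix⟩
  refine hmul.trans ?_
  congr 1
  exact GPath.ext hUs (by rw [hUe]; rfl)

def edgeLists : GIS Q → List Q.E × List Q.E
  | .zero => ([], [])
  | .elm p q _ => (p.edges, q.edges)

theorem finite_setOf_prefix (a b : Q.V) (L₁ L₂ : List Q.E) :
    {y : GIS Q | ∃ (p q : GPath Q) (h : p.rng = q.rng), y = elm p q h ∧
      p.start = a ∧ q.start = b ∧ p.edges <+: L₁ ∧ q.edges <+: L₂}.Finite := by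
  have hinits (L : List Q.E) : {l | l <+: L}.Finite :=
    L.inits.finite_toSet.subset fun l hl => List.mem_inits _ _ |>.2 hl
  refine Finite.of_finite_image (f := edgeLists) (((hinits L₁).prod (hinits L₂)).subset ?_) ?_
  · rintro _ ⟨_, ⟨p, q, h, rfl, -, -, hp, hq⟩, rfl⟩
    exact ⟨hp, hq⟩
  · rintro _ ⟨p, q, h, rfl, hp, hq, -⟩ _ ⟨p', q', h', rfl, hp', hq', -⟩ he
    simp only [edgeLists, Prod.mk.injEq] at he
    exact elm_congr (GPath.ext (hp.trans hp'.symm) he.1) (GPath.ext (hq.trans hq'.symm) he.2)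

end GIS

open GIS

section Isolated

variable [TopologicalSpace (GIS Q)] [T2Space (GIS Q)]

theorem isOpen_singleton_elm
    (hs : ∀ a : GIS Q, Continuous (fun x => a * x) ∧ Continuous (fun x => x * a))
    {u v : GPath Q} (h : u.rng = v.rng) {c : GPath Q} (hc : u.rng = c.start)
    (hne : c.edges ≠ []) : IsOpen {elm u v h} := by
  set wu := u.comp c hc
  set wv := v.comp c (h ▸ hc)
  have hw : wu.rng = wv.rng := by rw [GPath.comp_rng, GPath.comp_rng]
  have hlong : ¬ wu.edges <+: u.edges := fun hl =>
    hne (by simpa [wu, GPath.comp] using hl.length_le)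
  have hleft : elm wu wu rfl * elm u v h = elm wu wv hw := by
    obtain ⟨V, _, hmul, hVs, hVe⟩ :=
      elm_mul_elm_of_ge (u₁ := wu) (v₁ := wu) rfl h (fun hA => hlong hA.2) ⟨rfl, c.edges, rfl⟩
    rw [hmul]
    congr 1
    exact GPath.ext hVs (by rw [hVe]; simp [wu, wv, GPath.comp])
  have hright : elm u v h * elm wv wv rfl = elm wu wv hw := by
    obtain ⟨U, _, hmul, hUs, hUe⟩ :=
      elm_mul_elm_of_le (u₂ := wv) (v₂ := wv) h rfl ⟨rfl, c.edges, rfl⟩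
    rw [hmul]
    congr 1
    exact GPath.ext hUs (by rw [hUe]; simp [wu, wv, GPath.comp])
  have hx₁ : elm wu wv hw ≠ elm u v h := fun he =>
    hne (by simpa [wu, GPath.comp] using congrArg GPath.edges (GIS.elm.inj he).1)
  obtain ⟨P, O, hP, hO, hx₁P, hxO, hPO⟩ := t2_separation hx₁
  set N := O ∩ (elm wu wu rfl * ·) ⁻¹' (P \ {0}) ∩ (· * elm wv wv rfl) ⁻¹' (P \ {0})
  have hN : N ∈ nhds (elm u v h) := by
    have hP' : IsOpen (P \ {0}) := hP.sdiff isClosed_singleton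
    refine ((hO.inter ((hs _).1.isOpen_preimage _ hP')).inter
      ((hs _).2.isOpen_preimage _ hP')).mem_nhds ⟨⟨hxO, ?_⟩, ?_⟩ <;>
    simp only [mem_preimage, hleft, hright] <;> exact ⟨hx₁P, elm_ne_zero hw⟩
  refine isOpen_singleton_of_finite_mem_nhds _ hN
    ((finite_setOf_prefix u.start v.start wu.edges wv.edges).subset ?_)
  rintro (_ | ⟨p, q, hpq⟩) ⟨⟨hyO, hyl⟩, hyr⟩ <;> simp only [mem_preimage] at hyl hyr
  · exact (hyl.2 (mul_zero _)).elim
  have hp : p.start = wu.start ∧ p.edges <+: wu.edges := by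
    by_contra hp
    rcases idem_mul_elm_eq_self_or_zero wu hpq hp with he | he
    · exact disjoint_left.1 hPO (he ▸ hyl).1 hyO
    · exact hyl.2 he
  have hq : q.start = wv.start ∧ q.edges <+: wv.edges := by
    by_contra hq
    rcases elm_mul_idem_eq_self_or_zero wv hpq hq with he | he
    · exact disjoint_left.1 hPO (he ▸ hyr).1 hyO
    · exact hyr.2 he
  exact ⟨p, q, hpq, rfl, hp.1, hq.1, hp.2, hq.2⟩

theorem isOpen_singleton_of_ne_zero
    (hs : ∀ a : GIS Q, Continuous (fun x => a * x) ∧ Continuous (fun x => x * a))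
    (hout : ∀ a : Q.V, ∃ c : GPath Q, c.start = a ∧ c.edges ≠ []) {x : GIS Q} (hx : x ≠ 0) :
    IsOpen {x} := by
  obtain _ | ⟨u, v, h⟩ := x
  · exact (hx rfl).elim
  obtain ⟨c, hc, hne⟩ := hout u.rng
  exact isOpen_singleton_elm hs h hc.symm hne

end Isolated

def GIS.withSource (b : Q.V) : Set (GIS Q) :=
  {x | ∃ (u v : GPath Q) (h : u.rng = v.rng), x = elm u v h ∧ u.start = b}

theorem exists_withSource_inter_infinite [Finite Q.V] {U : Set (GIS Q)} (hU : U.Infinite) :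
    ∃ b, (withSource b ∩ U).Infinite := by
  by_contra! hfin
  refine hU (((finite_iUnion hfin).union (finite_singleton 0)).subset ?_)
  rintro (_ | ⟨u, v, h⟩) hx
  · exact .inr rfl
  · exact .inl (mem_iUnion.2 ⟨u.start, ⟨u, v, h, rfl, rfl⟩, hx⟩)

section CycleTranslation

variable {b : Q.V} {c : GPath Q}

theorem mapsTo_toGIS_mul_Lcl_inter_withSource (hcs : c.start = b) (hcr : c.rng = b)
    (v : GPath Q) :
    MapsTo (toGIS c * ·) (Lcl v ∩ withSource b) (Lcl v ∩ withSource b) := by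
  rintro _ ⟨⟨u, h, rfl⟩, ⟨_, _, _, he, hu⟩⟩
  obtain ⟨rfl, -⟩ := GIS.elm.inj he
  show toGIS c * _ ∈ _
  rw [toGIS_mul_elm c h (hcr.trans hu.symm)]
  exact ⟨⟨_, _, rfl⟩, ⟨_, _, _, rfl, hcs⟩⟩

theorem mapsTo_toGIS_mul_withSource (hcs : c.start = b) (hcr : c.rng = b) :
    MapsTo (toGIS c * ·) (withSource b) (withSource b) := by
  rintro _ ⟨u, v, h, rfl, hu⟩
  exact (mapsTo_toGIS_mul_Lcl_inter_withSource hcs hcr v ⟨⟨u, h, rfl⟩, ⟨u, v, h, rfl, hu⟩⟩).2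

theorem injOn_toGIS_mul_withSource (hcr : c.rng = b) : InjOn (toGIS c * ·) (withSource b) := by
  rintro _ ⟨u, v, h, rfl, hu⟩ _ ⟨u', v', h', rfl, hu'⟩ he
  simp only [toGIS_mul_elm c _ (hcr.trans hu.symm), toGIS_mul_elm c _ (hcr.trans hu'.symm)] at he
  obtain ⟨hcu, rfl⟩ := GIS.elm.inj he
  exact elm_congr (GPath.ext (hu.trans hu'.symm)
    (List.append_cancel_left (congrArg GPath.edges hcu))) rfl

theorem length_lt_toGIS_mul (hcr : c.rng = b) (hne : c.edges ≠ []) :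
    ∀ x ∈ withSource b, (edgeLists x).1.length < (edgeLists (toGIS c * x)).1.length := by
  rintro _ ⟨u, v, h, rfl, hu⟩
  rw [toGIS_mul_elm c h (hcr.trans hu.symm)]
  simpa [edgeLists, GPath.comp, List.length_pos_iff] using hne

end CycleTranslation

theorem exists_Lcl_inter_infinite [Finite Q.V]
    (hcyc : ∀ b : Q.V, ∃ c : GPath Q, c.start = b ∧ c.rng = b ∧ c.edges ≠ [])
    {U : Set (GIS Q)} (hU : U.Infinite) (hexit : ∀ a : GIS Q, (U \ (a * ·) ⁻¹' U).Finite) :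
    ∃ v : GPath Q, (Lcl v ∩ U).Infinite := by
  obtain ⟨b, hb⟩ := exists_withSource_inter_infinite hU
  obtain ⟨c, hcs, hcr, hne⟩ := hcyc b
  have hmaps := mapsTo_toGIS_mul_withSource hcs hcr
  have hℓ := length_lt_toGIS_mul hcr hne
  obtain ⟨x, hx, horbit⟩ := exists_forall_iterate_mem hmaps
    (injOn_toGIS_mul_withSource hcr) hℓ hb (hexit (toGIS c))
  obtain ⟨u, v, h, rfl, hu⟩ := hx
  refine ⟨v, (infinite_range_of_injective (injective_iterate_apply_of_lt hmaps hℓ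
    ⟨u, v, h, rfl, hu⟩)).mono ?_⟩
  rintro _ ⟨n, rfl⟩
  exact ⟨((mapsTo_toGIS_mul_Lcl_inter_withSource hcs hcr v).iterate n
    ⟨⟨u, h, rfl⟩, ⟨u, v, h, rfl, hu⟩⟩).1, horbit n⟩

end DGraph

theorem stmt15 (Q : DGraph) (hc : StrConn Q) (hfin : Finite Q.V)
    [TopologicalSpace (GIS Q)] [T2Space (GIS Q)] [LocallyCompactSpace (GIS Q)]
    (hs : ∀ a : GIS Q, Continuous (fun x => a * x) ∧ Continuous (fun x => x * a))
    (hnd : ¬ DiscreteTopology (GIS Q)) :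
    ∃ v : GPath Q, ∀ U : Set (GIS Q), IsOpen U → IsCompact U → (0 : GIS Q) ∈ U →
      (Lcl v ∩ U).Infinite := by
  obtain ⟨e⟩ : Nonempty Q.E := by
    by_contra hE
    have := not_nonempty_iff.1 hE
    have := GIS.finite_of_isEmpty_edges (Q := Q)
    exact hnd inferInstance
  have hcyc := exists_cycle hc e
  have hiso : ∀ x : GIS Q, x ≠ 0 → IsOpen {x} := fun _ =>
    isOpen_singleton_of_ne_zero hs fun a => (hcyc a).imp fun _ hc => ⟨hc.1, hc.2.2⟩
  obtain ⟨U₀, hU₀o, hU₀c, h0U₀⟩ := exists_isOpen_isCompact_mem hiso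
  have hexit (a : GIS Q) : (U₀ \ (a * ·) ⁻¹' U₀).Finite :=
    hU₀c.finite_diff hiso ((hs a).1.isOpen_preimage _ hU₀o) (by simpa [GIS.mul_zero] using h0U₀)
  obtain ⟨v, hv⟩ := exists_Lcl_inter_infinite hcyc (infinite_of_isOpen_of_mem hiso hnd hU₀o h0U₀)
    hexit
  refine ⟨v, fun U hUo _ h0U => (hv.sdiff (hU₀c.finite_diff hiso hUo h0U)).mono ?_⟩
  rintro x ⟨⟨hxL, hxU₀⟩, hx⟩
  exact ⟨hxL, by_contra fun hxU => hx ⟨hxU₀, hxU⟩⟩
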